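/- If a phylogenetic tree T (a phylogenetic network without hybrid nodes) is compared with itself or another phylogenetic tree T' on the same taxa set, then m(T,T') = 0 implies T ≅ T'. In other words, the nested labels representation Υ determines a phylogenetic tree up to isomorphism. -/

import Mathlib

open scoped Classical

/-- Nested-label encoding type at nesting depth `n`: an atom of `S`, or a
multiset of encodings of smaller depth. -/
def NLT (S : Type) : ℕ → Type :=
  fun n => Nat.rec S (fun _ ih => S ⊕ Multiset ih) n

/-- A phylogenetic network on a set `S` of taxa: a rooted finite DAG whose
leaves are bijectively labeled by `S`. -/
structure PhyloNetwork (S : Type) [Fintype S] : Type 1 where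
  V : Type
  fintypeV : Fintype V
  arc : V → V → Prop
  acyclic : ∀ v, ¬ Relation.TransGen arc v v
  root : V
  rootConn : ∀ v, Relation.ReflTransGen arc root v
  lab : V → S
  labBij : ∀ s : S, ∃! v, (∀ w, ¬ arc v w) ∧ lab v = s

attribute [instance] PhyloNetwork.fintypeV

variable {S : Type} [Fintype S]

def PhyloNetwork.IsLeaf (N : PhyloNetwork S) (v : N.V) : Prop := ∀ w, ¬ N.arc v w

noncomputable def PhyloNetwork.children (N : PhyloNetwork S) (v : N.V) : Multiset N.V :=
  (Finset.univ.filter (fun w => N.arc v w)).val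

/-- The nested label of a node, encoded at depth `n` (meaningful as soon as
`n` exceeds the height of the node). -/
noncomputable def nlAux (N : PhyloNetwork S) : (n : ℕ) → N.V → NLT S n
  | 0 => fun v => N.lab v
  | n+1 => fun v =>
      if N.IsLeaf v then Sum.inl (N.lab v)
      else Sum.inr ((N.children v).map (nlAux N n))

/-- A sufficient encoding depth for comparing nodes of the two networks. -/
def fuel (N1 N2 : PhyloNetwork S) : ℕ := Fintype.card N1.V + Fintype.card N2.V

/-- `ℓ(u) = ℓ(v)`: the nested labels of `u` and `v` coincide. -/
def sameNL (N1 N2 : PhyloNetwork S) (u : N1.V) (v : N2.V) : Prop :=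
  ∀ n, fuel N1 N2 ≤ n → nlAux N1 n u = nlAux N2 n v

/-- Symmetric difference of multisets. -/
noncomputable def msd {X : Type*} (M1 M2 : Multiset X) : Multiset X :=
  (M1 - M2) + (M2 - M1)

/-- The nested labels representation `Υ(N)` (at encoding depth `n`). -/
noncomputable def upsilon (N : PhyloNetwork S) (n : ℕ) : Multiset (NLT S n) :=
  Finset.univ.val.map (nlAux N n)

/-- Nakhleh's dissimilarity measure `m`. -/
noncomputable def mdist (N1 N2 : PhyloNetwork S) : ℝ :=
  (Multiset.card (msd (upsilon N1 (fuel N1 N2)) (upsilon N2 (fuel N1 N2))) : ℝ) / 2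

/-- `m_i(v)`: number of directed paths from `v` to the leaf labeled `i`. -/
noncomputable def PhyloNetwork.mu (N : PhyloNetwork S) (v : N.V) (i : S) : ℕ :=
  Set.ncard {l : List N.V | l.Chain' N.arc ∧ l.head? = some v ∧
    ∃ w, l.getLast? = some w ∧ N.IsLeaf w ∧ N.lab w = i}

/-- The μ-representation of `N`: the multiset of μ-vectors of its nodes. -/
noncomputable def muRep (N : PhyloNetwork S) : Multiset (S → ℕ) :=
  Finset.univ.val.map (fun v => N.mu v)

/-- The μ-distance. -/
noncomputable def dmu (N1 N2 : PhyloNetwork S) : ℝ :=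
  (Multiset.card (msd (muRep N1) (muRep N2)) : ℝ) / 2

/-- Number of directed paths between two nodes. -/
noncomputable def numPaths (N : PhyloNetwork S) (u w : N.V) : ℕ :=
  Set.ncard {l : List N.V | l.Chain' N.arc ∧ l.head? = some u ∧ l.getLast? = some w}

/-- Leaf-label preserving isomorphism of phylogenetic networks. -/
def PhyloIso (N1 N2 : PhyloNetwork S) : Prop :=
  ∃ e : N1.V ≃ N2.V, (∀ u v, N1.arc u v ↔ N2.arc (e u) (e v)) ∧
    ∀ v, N1.IsLeaf v → N2.lab (e v) = N1.lab v

/-- Height of a node: the largest length of a directed path from it to a leaf. -/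
noncomputable def PhyloNetwork.height (N : PhyloNetwork S) (v : N.V) : ℕ :=
  sSup {k | ∃ l : List N.V, l.Chain' N.arc ∧ l.head? = some v ∧
    (∃ w, l.getLast? = some w ∧ N.IsLeaf w) ∧ l.length = k + 1}

/-! ### Auxiliary lemmas for the proof -/

lemma wfArc (N : PhyloNetwork S) : WellFounded (fun a b : N.V => N.arc b a) := by
  haveI : Finite N.V := Finite.of_fintype _
  have : IsTrans N.V (fun a b => Relation.TransGen N.arc b a) :=
    ⟨fun a b c h1 h2 => h2.trans h1⟩
  have : IsIrrefl N.V (fun a b => Relation.TransGen N.arc b a) :=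
    ⟨fun a h => N.acyclic a h⟩
  exact Subrelation.wf (fun h => Relation.TransGen.single h)
    (Finite.wellFounded_of_trans_of_irrefl (fun a b : N.V => Relation.TransGen N.arc b a))

noncomputable def hb (N : PhyloNetwork S) : N.V → ℕ :=
  (wfArc N).fix fun v ih =>
    (Finset.univ.filter fun w => N.arc v w).attach.sup
      (fun w => ih w.1 ((Finset.mem_filter.mp w.2).2) + 1)

lemma hb_eq (N : PhyloNetwork S) (v : N.V) :
    hb N v = (Finset.univ.filter fun w => N.arc v w).attach.sup (fun w => hb N w.1 + 1) := by
  conv_lhs => rw [hb, WellFounded.fix_eq]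
  rfl

lemma hb_arc_lt {N : PhyloNetwork S} {v w : N.V} (h : N.arc v w) : hb N w < hb N v := by
  rw [hb_eq N v]
  have hw : w ∈ Finset.univ.filter fun x => N.arc v x := by
    simp [Finset.mem_filter, h]
  have hle := Finset.le_sup (f := fun x : {x // x ∈ Finset.univ.filter fun x => N.arc v x} =>
    hb N x.1 + 1) (Finset.mem_attach _ ⟨w, hw⟩)
  exact lt_of_lt_of_le (Nat.lt_succ_self (hb N w)) hle

lemma hb_leaf {N : PhyloNetwork S} {v : N.V} (h : hb N v ≤ 0) : N.IsLeaf v := by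
  intro w hw
  have := hb_arc_lt hw
  omega

lemma mem_children {N : PhyloNetwork S} {u w : N.V} : w ∈ N.children u ↔ N.arc u w := by
  simp [PhyloNetwork.children, ← Finset.mem_def]

lemma hb_lt_card (N : PhyloNetwork S) (v : N.V) : hb N v < Fintype.card N.V := by
  have key : ∀ v : N.V,
      hb N v < (Finset.univ.filter fun w => Relation.ReflTransGen N.arc v w).card := by
    intro v
    induction v using (wfArc N).induction with
    | _ v ih =>
      rw [hb_eq]
      have hvmem : v ∈ Finset.univ.filter fun w => Relation.ReflTransGen N.arc v w := by
        simp [Relation.ReflTransGen.refl]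
      refine Finset.sup_lt_iff (Finset.card_pos.mpr ⟨v, hvmem⟩) |>.mpr ?_
      rintro ⟨w, hw⟩ -
      have harc : N.arc v w := (Finset.mem_filter.mp hw).2
      show hb N w + 1 < _
      have h1 := ih w harc
      have hsub : (Finset.univ.filter fun x => Relation.ReflTransGen N.arc w x) ⊂
          Finset.univ.filter fun x => Relation.ReflTransGen N.arc v x := by
        constructor
        · intro x hx
          simp only [Finset.mem_filter, Finset.mem_univ, true_and] at hx ⊢
          exact Relation.ReflTransGen.head harc hx
        · intro hle
          have hv : v ∈ Finset.univ.filter fun x => Relation.ReflTransGen N.arc w x :=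
            hle hvmem
          simp only [Finset.mem_filter, Finset.mem_univ, true_and] at hv
          exact N.acyclic v (Relation.TransGen.head' harc hv)
      have h2 := Finset.card_lt_card hsub
      omega
  exact lt_of_lt_of_le (key v) (Finset.card_filter_le _ _)

lemma nl_zero (N : PhyloNetwork S) (v : N.V) : nlAux N 0 v = N.lab v := rfl

lemma nl_leaf {N : PhyloNetwork S} {v : N.V} (n : ℕ) (h : N.IsLeaf v) :
    nlAux N (n+1) v = Sum.inl (N.lab v) := by
  show (if N.IsLeaf v then Sum.inl (N.lab v)
    else Sum.inr ((N.children v).map (nlAux N n))) = _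
  rw [if_pos h]; rfl

lemma nl_node {N : PhyloNetwork S} {v : N.V} (n : ℕ) (h : ¬ N.IsLeaf v) :
    nlAux N (n+1) v = Sum.inr ((N.children v).map (nlAux N n)) := by
  show (if N.IsLeaf v then Sum.inl (N.lab v)
    else Sum.inr ((N.children v).map (nlAux N n))) = _
  rw [if_neg h]

omit [Fintype S] in
lemma nlt_inl_inj {n : ℕ} {a b : S} (h : (Sum.inl a : NLT S (n+1)) = Sum.inl b) : a = b :=
  Sum.inl.inj h

omit [Fintype S] in
lemma nlt_inr_inj {n : ℕ} {a b : Multiset (NLT S n)}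
    (h : (Sum.inr a : NLT S (n+1)) = Sum.inr b) : a = b :=
  Sum.inr.inj h

omit [Fintype S] in
lemma nlt_inl_ne_inr {n : ℕ} {a : S} {b : Multiset (NLT S n)}
    (h : (Sum.inl a : NLT S (n+1)) = Sum.inr b) : False :=
  Sum.inl_ne_inr h

lemma map_eq_map_iff {α β γ δ : Type*} (s : Multiset α) (t : Multiset β)
    (f : α → γ) (g : β → γ) (f' : α → δ) (g' : β → δ)
    (h : ∀ a ∈ s, ∀ b ∈ t, (f a = g b ↔ f' a = g' b)) :
    s.map f = t.map g ↔ s.map f' = t.map g' := by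
  rw [← Multiset.rel_eq, ← Multiset.rel_eq, Multiset.rel_map, Multiset.rel_map]
  constructor
  · exact fun hr => hr.mono (fun a ha b hbb hab => (h a ha b hbb).mp hab)
  · exact fun hr => hr.mono (fun a ha b hbb hab => (h a ha b hbb).mpr hab)

lemma nl_step (N1 N2 : PhyloNetwork S) :
    ∀ (n : ℕ) (u : N1.V) (v : N2.V), hb N1 u ≤ n → hb N2 v ≤ n →
      (nlAux N1 (n+1) u = nlAux N2 (n+1) v ↔ nlAux N1 n u = nlAux N2 n v) := by
  intro n
  induction n with
  | zero =>
    intro u v hu hv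
    have hlu := hb_leaf hu
    have hlv := hb_leaf hv
    rw [nl_leaf 0 hlu, nl_leaf 0 hlv, nl_zero, nl_zero]
    exact ⟨fun h => Sum.inl.inj h, fun h => by rw [h]⟩
  | succ n ih =>
    intro u v hu hv
    by_cases hlu : N1.IsLeaf u <;> by_cases hlv : N2.IsLeaf v
    · rw [nl_leaf (n+1) hlu, nl_leaf (n+1) hlv, nl_leaf n hlu, nl_leaf n hlv]
      exact ⟨fun h => by rw [Sum.inl.inj h], fun h => by rw [Sum.inl.inj h]⟩
    · rw [nl_leaf (n+1) hlu, nl_node (n+1) hlv, nl_leaf n hlu, nl_node n hlv]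
      exact iff_of_false (fun h => (Sum.inl_ne_inr h : False)) (fun h => (Sum.inl_ne_inr h : False))
    · rw [nl_node (n+1) hlu, nl_leaf (n+1) hlv, nl_node n hlu, nl_leaf n hlv]
      exact iff_of_false (fun h => (Sum.inl_ne_inr h.symm : False)) (fun h => (Sum.inl_ne_inr h.symm : False))
    · rw [nl_node (n+1) hlu, nl_node (n+1) hlv, nl_node n hlu, nl_node n hlv]
      have key := map_eq_map_iff (N1.children u) (N2.children v)
        (nlAux N1 (n+1)) (nlAux N2 (n+1)) (nlAux N1 n) (nlAux N2 n)
        (fun a ha b hbb => by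
          have ha' : N1.arc u a := mem_children.mp ha
          have hb' : N2.arc v b := mem_children.mp hbb
          have h1 : hb N1 a ≤ n := by have := hb_arc_lt ha'; omega
          have h2 : hb N2 b ≤ n := by have := hb_arc_lt hb'; omega
          exact ih a b h1 h2)
      exact ⟨fun h => by rw [key.mp (Sum.inr.inj h)],
             fun h => by rw [key.mpr (Sum.inr.inj h)]⟩

lemma nl_transfer (N1 N2 : PhyloNetwork S) (u : N1.V) (v : N2.V) {n : ℕ}
    (hu : hb N1 u ≤ n) (hv : hb N2 v ≤ n) {m : ℕ} (hnm : n ≤ m) :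
    nlAux N1 m u = nlAux N2 m v ↔ nlAux N1 n u = nlAux N2 n v := by
  induction m, hnm using Nat.le_induction with
  | base => rfl
  | succ m hm ih => rw [nl_step N1 N2 m u v (hu.trans hm) (hv.trans hm)]; exact ih

lemma nl_inj (N : PhyloNetwork S)
    (hN : ∀ (v p q : N.V), N.arc p v → N.arc q v → p = q) :
    ∀ (u : N.V) (n : ℕ) (v : N.V), hb N u ≤ n → hb N v ≤ n →
      nlAux N (n+1) u = nlAux N (n+1) v → u = v := by
  intro u
  induction u using (wfArc N).induction with
  | _ u ih =>
    intro n v hu hv h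
    by_cases hlu : N.IsLeaf u <;> by_cases hlv : N.IsLeaf v
    · rw [nl_leaf n hlu, nl_leaf n hlv] at h
      have hlab := Sum.inl.inj h
      obtain ⟨x, hx, hux⟩ := N.labBij (N.lab u)
      have h1 : u = x := hux u ⟨hlu, rfl⟩
      have h2 : v = x := hux v ⟨hlv, hlab.symm⟩
      rw [h1, h2]
    · rw [nl_leaf n hlu, nl_node n hlv] at h
      exact ((Sum.inl_ne_inr h : False)).elim
    · rw [nl_node n hlu, nl_leaf n hlv] at h
      exact ((Sum.inl_ne_inr h.symm : False)).elim
    · rw [nl_node n hlu, nl_node n hlv] at h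
      have hmap := Sum.inr.inj h
      cases n with
      | zero => exact absurd (hb_leaf hu) hlu
      | succ k =>
        simp only [PhyloNetwork.IsLeaf, not_forall, not_not] at hlu
        obtain ⟨w, hw⟩ := hlu
        have hwmem : w ∈ N.children u := mem_children.mpr hw
        have hmem : nlAux N (k+1) w ∈ (N.children v).map (nlAux N (k+1)) := by
          rw [← hmap]; exact Multiset.mem_map_of_mem _ hwmem
        obtain ⟨y, hy, hyw⟩ := Multiset.mem_map.mp hmem
        have hy' : N.arc v y := mem_children.mp hy
        have hbw : hb N w ≤ k := by have := hb_arc_lt hw; omega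
        have hby : hb N y ≤ k := by have := hb_arc_lt hy'; omega
        have hwy : w = y := ih w hw k y hbw hby hyw.symm
        exact hN w u v hw (hwy ▸ hy')


/-- If `T` and `T'` are phylogenetic trees (phylogenetic networks without
hybrid nodes) on the same taxa set, then `m(T,T') = 0` implies `T ≅ T'`:
the nested labels representation determines a phylogenetic tree up to
isomorphism. -/
theorem m_separates_trees (T T' : PhyloNetwork S)
    (hT : ∀ (v p q : T.V), T.arc p v → T.arc q v → p = q)
    (hT' : ∀ (v p q : T'.V), T'.arc p v → T'.arc q v → p = q)
    (h : mdist T T' = 0) : PhyloIso T T' := by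
  -- Step 1: the nested labels representations agree
  have hU : upsilon T (fuel T T') = upsilon T' (fuel T T') := by
    have hc : (Multiset.card (msd (upsilon T (fuel T T')) (upsilon T' (fuel T T'))) : ℝ) = 0 := by
      unfold mdist at h
      linarith
    have hc0 : Multiset.card (msd (upsilon T (fuel T T')) (upsilon T' (fuel T T'))) = 0 := by
      exact_mod_cast hc
    have hmsd : msd (upsilon T (fuel T T')) (upsilon T' (fuel T T')) = 0 :=
      Multiset.card_eq_zero.mp hc0
    unfold msd at hmsd
    have h1 : upsilon T (fuel T T') - upsilon T' (fuel T T') = 0 :=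
      Multiset.le_zero.mp (hmsd ▸ le_add_right le_rfl)
    have h2 : upsilon T' (fuel T T') - upsilon T (fuel T T') = 0 :=
      Multiset.le_zero.mp (hmsd ▸ le_add_left le_rfl)
    exact le_antisymm (tsub_eq_zero_iff_le.mp h1) (tsub_eq_zero_iff_le.mp h2)
  -- Step 2: arithmetic setup
  have hc1 : 1 ≤ Fintype.card T.V := Fintype.card_pos_iff.mpr ⟨T.root⟩
  have hc2 : 1 ≤ Fintype.card T'.V := Fintype.card_pos_iff.mpr ⟨T'.root⟩
  obtain ⟨m, hm⟩ : ∃ m, fuel T T' = m + 2 := by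
    refine ⟨Fintype.card T.V + Fintype.card T'.V - 2, ?_⟩
    unfold fuel; omega
  have hbT : ∀ v : T.V, hb T v ≤ m := by
    intro v
    have := hb_lt_card T v
    unfold fuel at hm; omega
  have hbT' : ∀ v : T'.V, hb T' v ≤ m := by
    intro v
    have := hb_lt_card T' v
    unfold fuel at hm; omega
  rw [hm] at hU
  unfold upsilon at hU
  -- Step 3: build the bijection
  have exw : ∀ v : T.V, ∃ w : T'.V, nlAux T' (m+2) w = nlAux T (m+2) v := by
    intro v
    have hmem : nlAux T (m+2) v ∈ Finset.univ.val.map (nlAux T (m+2)) :=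
      Multiset.mem_map_of_mem _ (by simp [← Finset.mem_def])
    rw [hU] at hmem
    obtain ⟨w, _, hw⟩ := Multiset.mem_map.mp hmem
    exact ⟨w, hw⟩
  set f : T.V → T'.V := fun v => Classical.choose (exw v) with hf_def
  have hf : ∀ v, nlAux T' (m+2) (f v) = nlAux T (m+2) v := fun v => Classical.choose_spec (exw v)
  have hinjT : ∀ u v : T.V, nlAux T (m+2) u = nlAux T (m+2) v → u = v := by
    intro u v huv
    exact nl_inj T hT u (m+1) v (by have := hbT u; omega) (by have := hbT v; omega) huv
  have hinjT' : ∀ u v : T'.V, nlAux T' (m+2) u = nlAux T' (m+2) v → u = v := by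
    intro u v huv
    exact nl_inj T' hT' u (m+1) v (by have := hbT' u; omega) (by have := hbT' v; omega) huv
  have hfinj : Function.Injective f := by
    intro u v huv
    apply hinjT
    rw [← hf u, ← hf v, huv]
  have hfsurj : Function.Surjective f := by
    intro w
    have hmem : nlAux T' (m+2) w ∈ Finset.univ.val.map (nlAux T (m+2)) := by
      rw [hU]
      exact Multiset.mem_map_of_mem _ (by simp [← Finset.mem_def])
    obtain ⟨v, _, hv⟩ := Multiset.mem_map.mp hmem
    refine ⟨v, hinjT' _ _ ?_⟩
    rw [hf v, hv]
  -- f preserves leaf status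
  have hleaf_iff : ∀ v : T.V, (T.IsLeaf v ↔ T'.IsLeaf (f v)) := by
    intro v
    constructor
    · intro h1
      by_contra h2
      have := hf v
      rw [nl_node (m+1) h2, nl_leaf (m+1) h1] at this
      exact (Sum.inl_ne_inr this.symm : False)
    · intro h2
      by_contra h1
      have := hf v
      rw [nl_leaf (m+1) h2, nl_node (m+1) h1] at this
      exact (Sum.inl_ne_inr this : False)
  -- children multisets match (for internal nodes)
  have hchild : ∀ u : T.V, ¬ T.IsLeaf u →
      (T.children u).map (nlAux T (m+1)) = (T'.children (f u)).map (nlAux T' (m+1)) := by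
    intro u hu
    have hu' : ¬ T'.IsLeaf (f u) := fun hc => hu ((hleaf_iff u).mpr hc)
    have heq := hf u
    rw [nl_node (m+1) hu', nl_node (m+1) hu] at heq
    exact (Sum.inr.inj heq).symm
  -- transfer equality from depth m+2 to depth m+1
  have htrans : ∀ (v : T.V), nlAux T' (m+1) (f v) = nlAux T (m+1) v := by
    intro v
    exact (nl_transfer T' T (f v) v (by have := hbT' (f v); omega)
      (by have := hbT v; omega) (by omega)).mp (hf v)
  refine ⟨Equiv.ofBijective f ⟨hfinj, hfsurj⟩, ?_, ?_⟩
  · intro u v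
    show T.arc u v ↔ T'.arc (f u) (f v)
    constructor
    · intro harc
      have hu : ¬ T.IsLeaf u := fun hc => hc v harc
      have hch := hchild u hu
      have hvmem : nlAux T (m+1) v ∈ (T.children u).map (nlAux T (m+1)) :=
        Multiset.mem_map_of_mem _ (mem_children.mpr harc)
      rw [hch] at hvmem
      obtain ⟨w, hwmem, hw⟩ := Multiset.mem_map.mp hvmem
      have hw' : T'.arc (f u) w := mem_children.mp hwmem
      have hwfv : w = f v :=
        nl_inj T' hT' w m (f v) (hbT' w) (hbT' (f v)) (hw.trans (htrans v).symm)
      rwa [hwfv] at hw'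
    · intro harc
      have hu' : ¬ T'.IsLeaf (f u) := fun hc => hc (f v) harc
      have hu : ¬ T.IsLeaf u := fun hc => hu' ((hleaf_iff u).mp hc)
      have hch := hchild u hu
      have hvmem : nlAux T' (m+1) (f v) ∈ (T'.children (f u)).map (nlAux T' (m+1)) :=
        Multiset.mem_map_of_mem _ (mem_children.mpr harc)
      rw [← hch] at hvmem
      obtain ⟨x, hxmem, hx⟩ := Multiset.mem_map.mp hvmem
      have hx' : T.arc u x := mem_children.mp hxmem
      have hxv : x = v :=
        nl_inj T hT x m v (hbT x) (hbT v) (hx.trans (htrans v))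
      rwa [hxv] at hx'
  · intro v hv
    show T'.lab (f v) = T.lab v
    have h2 : T'.IsLeaf (f v) := (hleaf_iff v).mp hv
    have heq := hf v
    rw [nl_leaf (m+1) h2, nl_leaf (m+1) hv] at heq
    exact Sum.inl.inj heq
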